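/- arXiv:2402.18795 — 6 statements merged into one kernel-verified Lean document; each statement's English description precedes it below -/
import Mathlib

section
/- Let m, n, s be positive integers, A a 0-1 matrix of size m×n, c a nonnegative cost vector, p_1,...,p_s nonnegative reals summing to 1, ε ∈ [0,1), and for each k ∈ [m] a set S_k ⊆ [s]. Consider the MIP: minimize cᵀx subject to Ax ≥ v, v_k ≥ z_i for all k ∈ [m] and i ∈ S_k, Σ_i p_i z_i ≥ 1−ε, with x ∈ {0,1}ⁿ, v ∈ {0,1}ᵐ, z ∈ {0,1}ˢ; and its relaxation MIP' where z ∈ [0,1]ˢ. Then MIP and MIP' have the same optimal value. -/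
open Finset

theorem stmt_0 (m n s : ℕ) (hm : 0 < m) (hn : 0 < n) (hs : 0 < s)
    (A : Fin m → Fin n → ℝ) (hA : ∀ k j, A k j = 0 ∨ A k j = 1)
    (c : Fin n → ℝ) (hc : ∀ j, 0 ≤ c j)
    (p : Fin s → ℝ) (hp : ∀ i, 0 ≤ p i) (hpsum : ∑ i, p i = 1)
    (ε : ℝ) (hε0 : 0 ≤ ε) (hε1 : ε < 1)
    (S : Fin m → Finset (Fin s)) (hcover : ∀ i, ∃ k, i ∈ S k) :
    sInf {val : ℝ | ∃ (x : Fin n → ℝ) (v : Fin m → ℝ) (z : Fin s → ℝ),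
        (∀ j, x j = 0 ∨ x j = 1) ∧ (∀ k, v k = 0 ∨ v k = 1) ∧
        (∀ i, z i = 0 ∨ z i = 1) ∧
        (∀ k, v k ≤ ∑ j, A k j * x j) ∧
        (∀ k, ∀ i ∈ S k, z i ≤ v k) ∧
        (1 - ε ≤ ∑ i, p i * z i) ∧
        val = ∑ j, c j * x j}
    = sInf {val : ℝ | ∃ (x : Fin n → ℝ) (v : Fin m → ℝ) (z : Fin s → ℝ),
        (∀ j, x j = 0 ∨ x j = 1) ∧ (∀ k, v k = 0 ∨ v k = 1) ∧
        (∀ i, 0 ≤ z i ∧ z i ≤ 1) ∧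
        (∀ k, v k ≤ ∑ j, A k j * x j) ∧
        (∀ k, ∀ i ∈ S k, z i ≤ v k) ∧
        (1 - ε ≤ ∑ i, p i * z i) ∧
        val = ∑ j, c j * x j} := by
  classical
  congr 1
  ext val
  constructor
  · rintro ⟨x, v, z, hx, hv, hz, hAx, hzv, hps, hval⟩
    exact ⟨x, v, z, hx, hv, fun i => by rcases hz i with h | h <;> simp [h],
      hAx, hzv, hps, hval⟩
  · rintro ⟨x, v, z, hx, hv, hz, hAx, hzv, hps, hval⟩
    set z' : Fin s → ℝ := fun i => if ∀ k, i ∈ S k → v k = 1 then 1 else 0 with hz'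
    have hle : ∀ i, z i ≤ z' i := by
      intro i
      by_cases h : ∀ k, i ∈ S k → v k = 1
      · simp only [hz', if_pos h]; exact (hz i).2
      · simp only [hz', if_neg h]
        push_neg at h
        obtain ⟨k, hik, hvk⟩ := h
        have : v k = 0 := (hv k).resolve_right hvk
        have := hzv k i hik
        linarith
    refine ⟨x, v, z', hx, hv, fun i => ?_, hAx, ?_, ?_, hval⟩
    · by_cases h : ∀ k, i ∈ S k → v k = 1
      · exact Or.inr (if_pos h)
      · exact Or.inl (if_neg h)
    · intro k i hik
      by_cases h : ∀ k, i ∈ S k → v k = 1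
      · have : z' i = 1 := if_pos h
        rw [this, h k hik]
      · simp only [hz', if_neg h]
        rcases hv k with h0 | h0 <;> rw [h0] <;> norm_num
    · calc 1 - ε ≤ ∑ i, p i * z i := hps
        _ ≤ ∑ i, p i * z' i :=
          Finset.sum_le_sum fun i _ => mul_le_mul_of_nonneg_left (hle i) (hp i)
end

section
/- With the setup of the probabilistic set covering MIP: given a feasible point (x, v, z) of the relaxation MIP' (with z ∈ [0,1]ˢ), define z̄ ∈ {0,1}ˢ by z̄_i = min_{k ∈ M_i} v_k where M_i = {k ∈ [m] : i ∈ S_k}. Then (x, v, z̄) is feasible for the original MIP (with binary z) and has the same objective value cᵀx. -/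
open Finset

theorem stmt_1 (m n s : ℕ) (hm : 0 < m) (hn : 0 < n) (hs : 0 < s)
    (A : Fin m → Fin n → ℝ) (hA : ∀ k j, A k j = 0 ∨ A k j = 1)
    (c : Fin n → ℝ) (hc : ∀ j, 0 ≤ c j)
    (p : Fin s → ℝ) (hp : ∀ i, 0 ≤ p i) (hpsum : ∑ i, p i = 1)
    (ε : ℝ) (hε0 : 0 ≤ ε) (hε1 : ε < 1)
    (S : Fin m → Finset (Fin s)) (hcover : ∀ i, ∃ k, i ∈ S k)
    (hMne : ∀ i : Fin s, (Finset.univ.filter fun k => i ∈ S k).Nonempty)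
    (x : Fin n → ℝ) (v : Fin m → ℝ) (z : Fin s → ℝ)
    (hx : ∀ j, x j = 0 ∨ x j = 1) (hv : ∀ k, v k = 0 ∨ v k = 1)
    (hz : ∀ i, 0 ≤ z i ∧ z i ≤ 1)
    (hAx : ∀ k, v k ≤ ∑ j, A k j * x j)
    (hzv : ∀ k, ∀ i ∈ S k, z i ≤ v k)
    (hprob : 1 - ε ≤ ∑ i, p i * z i)
    (zbar : Fin s → ℝ)
    (hzbar : ∀ i, zbar i = (Finset.univ.filter fun k => i ∈ S k).inf' (hMne i) v) :
    (∀ i, zbar i = 0 ∨ zbar i = 1) ∧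
    (∀ k, v k ≤ ∑ j, A k j * x j) ∧
    (∀ k, ∀ i ∈ S k, zbar i ≤ v k) ∧
    (1 - ε ≤ ∑ i, p i * zbar i) ∧
    (∑ j, c j * x j) = (∑ j, c j * x j) := by

  have hkey : ∀ i, z i ≤ zbar i := by
    intro i
    rw [hzbar i]
    apply Finset.le_inf'
    intro k hk
    exact hzv k i (Finset.mem_filter.mp hk).2
  refine ⟨?_, hAx, ?_, ?_, rfl⟩
  · intro i
    rw [hzbar i]
    obtain ⟨k, hk, hke⟩ := Finset.exists_mem_eq_inf' (hMne i) v
    rw [hke]; exact hv k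
  · intro k i hi
    rw [hzbar i]
    exact Finset.inf'_le v (Finset.mem_filter.mpr ⟨Finset.mem_univ k, hi⟩)
  · refine le_trans hprob (Finset.sum_le_sum fun i _ => ?_)
    exact mul_le_mul_of_nonneg_left (hkey i) (hp i)
end

section
/- The Benders feasibility cut Σ_{k=1}^m p(S_k \ S_{[k−1]}) v_k ≥ 1 − ε, where S_{[k−1]} = ∪_{k'<k} S_{k'} (S_{[0]} = ∅) and p(T) = Σ_{i∈T} p_i, is valid for all v ∈ {0,1}ᵐ satisfying the probabilistic covering condition; that is, if v ∈ {0,1}ᵐ and there exists z ∈ [0,1]ˢ with z_i ≤ v_k for all k ∈ [m], i ∈ S_k, and Σ_i p_i z_i ≥ 1 − ε, then Σ_{k=1}^m p(S_k \ S_{[k−1]}) v_k ≥ 1 − ε. -/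
open Finset

theorem stmt_4 (m s : ℕ) (hm : 0 < m) (hs : 0 < s)
    (p : Fin s → ℝ) (hp : ∀ i, 0 ≤ p i) (hpsum : ∑ i, p i = 1)
    (ε : ℝ) (hε0 : 0 ≤ ε) (hε1 : ε < 1)
    (S : Fin m → Finset (Fin s)) (hcover : ∀ i, ∃ k, i ∈ S k)
    (v : Fin m → ℝ) (hv : ∀ k, v k = 0 ∨ v k = 1)
    (hfeas : ∃ z : Fin s → ℝ, (∀ i, 0 ≤ z i ∧ z i ≤ 1) ∧
      (∀ k, ∀ i ∈ S k, z i ≤ v k) ∧ 1 - ε ≤ ∑ i, p i * z i) :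
    1 - ε ≤ ∑ k, (∑ i ∈ S k \ (Finset.univ.filter fun k' => k' < k).biUnion S, p i) * v k := by
  obtain ⟨z, hz01, hzv, hzsum⟩ := hfeas
  set D : Fin m → Finset (Fin s) :=
    fun k => S k \ (Finset.univ.filter fun k' => k' < k).biUnion S with hD
  have hmemD : ∀ k i, i ∈ D k ↔ i ∈ S k ∧ ∀ k' < k, i ∉ S k' := by
    intro k i
    simp [hD, Finset.mem_sdiff, Finset.mem_biUnion]
  have hdisj : ∀ k₁ ∈ (Finset.univ : Finset (Fin m)), ∀ k₂ ∈ Finset.univ,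
      k₁ ≠ k₂ → Disjoint (D k₁) (D k₂) := by
    intro k₁ _ k₂ _ hne
    rw [Finset.disjoint_left]
    intro i h1 h2
    rcases lt_or_gt_of_ne hne with h | h
    · exact ((hmemD k₂ i).1 h2).2 k₁ h ((hmemD k₁ i).1 h1).1
    · exact ((hmemD k₁ i).1 h1).2 k₂ h ((hmemD k₂ i).1 h2).1
  have hunion : Finset.univ.biUnion D = (Finset.univ : Finset (Fin s)) := by
    apply Finset.eq_univ_of_forall
    intro i
    rw [Finset.mem_biUnion]
    set T : Finset (Fin m) := Finset.univ.filter fun k => i ∈ S k with hT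
    have hTne : T.Nonempty := by
      obtain ⟨k, hk⟩ := hcover i
      exact ⟨k, by simp [hT, hk]⟩
    refine ⟨T.min' hTne, Finset.mem_univ _, ?_⟩
    rw [hmemD]
    constructor
    · have := T.min'_mem hTne
      simpa [hT] using this
    · intro k' hk' hmem
      have : T.min' hTne ≤ k' := T.min'_le k' (by simp [hT, hmem])
      exact absurd hk' (not_lt.2 this)
  calc 1 - ε ≤ ∑ i, p i * z i := hzsum
    _ = ∑ k, ∑ i ∈ D k, p i * z i := by
        rw [← Finset.sum_biUnion hdisj, hunion]
    _ ≤ ∑ k, ∑ i ∈ D k, p i * v k := by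
        apply Finset.sum_le_sum
        intro k _
        apply Finset.sum_le_sum
        intro i hi
        have hiS : i ∈ S k := ((hmemD k i).1 hi).1
        exact mul_le_mul_of_nonneg_left (hzv k i hiS) (hp i)
    _ = ∑ k, (∑ i ∈ D k, p i) * v k := by
        simp [Finset.sum_mul]
end

section
/- Let δ > 0 and let S_{[k−1]} = ∪_{k'<k} S_{k'}, p(T) = Σ_{i∈T} p_i. The inequality Σ_{k=1}^{m_t} p(S_k \ S_{[k−1]}) v_k ≥ δ(η + 1 − ln δ) is valid for all (v, η) ∈ [0,1]^{m_t} × ℝ satisfying η ≤ ln(Σ_{i=1}^s p_i · min_{k ∈ M_i} v_k); that is, the generalized Benders cut derived at any point with δ = Σ_i p_i min_{k∈M_i} v*_k > 0 is satisfied by every such (v, η). -/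
open Finset

theorem stmt_11 (mt s : ℕ)
    (p : Fin s → ℝ) (hp : ∀ i, 0 ≤ p i) (hpsum : ∑ i, p i = 1)
    (S : Fin mt → Finset (Fin s))
    (hMne : ∀ i : Fin s, (Finset.univ.filter fun k => i ∈ S k).Nonempty)
    (δ : ℝ) (hδ : 0 < δ)
    (v : Fin mt → ℝ) (hv : ∀ k, 0 ≤ v k ∧ v k ≤ 1) (η : ℝ)
    (hw : 0 < ∑ i, p i * (Finset.univ.filter fun k => i ∈ S k).inf' (hMne i) v)
    (hη : η ≤ Real.log (∑ i, p i * (Finset.univ.filter fun k => i ∈ S k).inf' (hMne i) v)) :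
    δ * (η + 1 - Real.log δ)
      ≤ ∑ k, (∑ i ∈ S k \ (Finset.univ.filter fun k' => k' < k).biUnion S, p i) * v k := by
  set w := ∑ i, p i * (Finset.univ.filter fun k => i ∈ S k).inf' (hMne i) v with hwdef
  set T : Fin mt → Finset (Fin s) :=
    fun k => S k \ (Finset.univ.filter fun k' => k' < k).biUnion S with hT
  -- Step 1: δ * (η + 1 - log δ) ≤ w
  have h2 : δ * (Real.log w - Real.log δ) ≤ w - δ := by
    have h3 := Real.log_le_sub_one_of_pos (show 0 < w / δ from div_pos hw hδ)
    rw [Real.log_div hw.ne' hδ.ne'] at h3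
    calc δ * (Real.log w - Real.log δ) ≤ δ * (w / δ - 1) := by nlinarith
      _ = w - δ := by field_simp
  have h1 : δ * (η + 1 - Real.log δ) ≤ w := by
    nlinarith [mul_le_mul_of_nonneg_left hη hδ.le]
  -- Step 2: w ≤ RHS
  have hdisj : ∀ a ∈ (Finset.univ : Finset (Fin mt)), ∀ b ∈ Finset.univ, a ≠ b →
      Disjoint (T a) (T b) := by
    intro a _ b _ hab
    rw [Finset.disjoint_left]
    intro x hxa hxb
    rcases lt_or_gt_of_ne hab with h | h
    · have hxSa : x ∈ S a := (Finset.mem_sdiff.mp hxa).1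
      have := (Finset.mem_sdiff.mp hxb).2
      exact this (Finset.mem_biUnion.mpr ⟨a, Finset.mem_filter.mpr ⟨Finset.mem_univ _, h⟩, hxSa⟩)
    · have hxSb : x ∈ S b := (Finset.mem_sdiff.mp hxb).1
      have := (Finset.mem_sdiff.mp hxa).2
      exact this (Finset.mem_biUnion.mpr ⟨b, Finset.mem_filter.mpr ⟨Finset.mem_univ _, h⟩, hxSb⟩)
  have hcover : Finset.univ.biUnion T = (Finset.univ : Finset (Fin s)) := by
    ext i
    simp only [Finset.mem_biUnion, Finset.mem_univ, iff_true, true_and]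
    set F := Finset.univ.filter fun k => i ∈ S k with hF
    refine ⟨F.min' (hMne i), ?_⟩
    have hmem : F.min' (hMne i) ∈ F := Finset.min'_mem _ _
    rw [Finset.mem_sdiff]
    refine ⟨(Finset.mem_filter.mp hmem).2, ?_⟩
    intro hcontra
    obtain ⟨k', hk', hik'⟩ := Finset.mem_biUnion.mp hcontra
    have hk'lt : k' < F.min' (hMne i) := (Finset.mem_filter.mp hk').2
    have : F.min' (hMne i) ≤ k' :=
      Finset.min'_le F k' (show k' ∈ F from Finset.mem_filter.mpr ⟨Finset.mem_univ _, hik'⟩)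
    exact absurd hk'lt (not_lt.mpr this)
  have hsplit : w = ∑ k, ∑ i ∈ T k, p i * (Finset.univ.filter fun k => i ∈ S k).inf' (hMne i) v := by
    rw [hwdef, ← hcover, Finset.sum_biUnion hdisj]
  have h4 : w ≤ ∑ k, (∑ i ∈ T k, p i) * v k := by
    rw [hsplit]
    apply Finset.sum_le_sum
    intro k _
    rw [Finset.sum_mul]
    apply Finset.sum_le_sum
    intro i hi
    have hiS : i ∈ S k := (Finset.mem_sdiff.mp hi).1
    have hinf : (Finset.univ.filter fun k => i ∈ S k).inf' (hMne i) v ≤ v k :=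
      Finset.inf'_le v (show k ∈ Finset.univ.filter fun k => i ∈ S k from
        Finset.mem_filter.mpr ⟨Finset.mem_univ _, hiS⟩)
    exact mul_le_mul_of_nonneg_left hinf (hp i)
  exact h1.trans h4
end

section
/- A binary vector v ∈ {0,1}ᵐ satisfies Ψ(v) ≤ 0, i.e. Σ_{i=1}^s p_i · min_{k ∈ M_i} v_k ≥ 1 − ε, if and only if v satisfies every Benders feasibility cut of the form Σ_{k=1}^m p(S_{σ(k)} \ ∪_{k'<k} S_{σ(k')}) v_{σ(k)} ≥ 1 − ε over all permutations σ of [m]; moreover if Ψ(v) > 0 then the cut corresponding to a permutation sorting v nondecreasingly is violated by v. -/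
open Finset

private lemma aux_ne {m s : ℕ} (S : Fin m → Finset (Fin s))
    (hMne : ∀ i : Fin s, (Finset.univ.filter fun k => i ∈ S k).Nonempty)
    (σ : Equiv.Perm (Fin m)) (i : Fin s) :
    (Finset.univ.filter fun k => i ∈ S (σ k)).Nonempty := by
  obtain ⟨k, hk⟩ := hMne i
  simp only [mem_filter, mem_univ, true_and] at hk
  exact ⟨σ.symm k, by simp [hk]⟩

private lemma cut_eq {m s : ℕ} (p : Fin s → ℝ) (S : Fin m → Finset (Fin s))
    (hMne : ∀ i : Fin s, (Finset.univ.filter fun k => i ∈ S k).Nonempty)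
    (σ : Equiv.Perm (Fin m)) (v : Fin m → ℝ) :
    ∑ k, (∑ i ∈ S (σ k) \ (Finset.univ.filter fun k' => k' < k).biUnion
        (fun k' => S (σ k')), p i) * v (σ k)
    = ∑ i, p i * v (σ ((Finset.univ.filter fun k => i ∈ S (σ k)).min'
        (aux_ne S hMne σ i))) := by
  set f : Fin s → Fin m := fun i =>
    (Finset.univ.filter fun k => i ∈ S (σ k)).min' (aux_ne S hMne σ i) with hfdef
  have hf : ∀ i, i ∈ S (σ (f i)) := by
    intro i
    have := Finset.min'_mem _ (aux_ne S hMne σ i)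
    simpa using this
  have hfmin : ∀ i k, i ∈ S (σ k) → f i ≤ k := by
    intro i k hk
    exact Finset.min'_le _ _ (by simpa using hk)
  have hD : ∀ k : Fin m,
      S (σ k) \ (Finset.univ.filter fun k' => k' < k).biUnion (fun k' => S (σ k'))
        = Finset.univ.filter (fun i => f i = k) := by
    intro k
    ext i
    simp only [mem_sdiff, mem_biUnion, mem_filter, mem_univ, true_and, not_exists, not_and]
    constructor
    · rintro ⟨h1, h2⟩
      have hle : f i ≤ k := hfmin i k h1
      rcases lt_or_eq_of_le hle with hlt | heq
      · exact absurd (hf i) (h2 (f i) hlt)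
      · exact heq
    · rintro rfl
      exact ⟨hf i, fun k' hk' hmem => absurd (hfmin i k' hmem) (not_le.mpr hk')⟩
  calc ∑ k, (∑ i ∈ S (σ k) \ (Finset.univ.filter fun k' => k' < k).biUnion
        (fun k' => S (σ k')), p i) * v (σ k)
      = ∑ k, ∑ i ∈ Finset.univ.filter (fun i => f i = k), p i * v (σ (f i)) := by
        refine Finset.sum_congr rfl fun k _ => ?_
        rw [hD k, Finset.sum_mul]
        refine Finset.sum_congr rfl fun i hi => ?_
        simp only [mem_filter] at hi
        rw [hi.2]
    _ = ∑ i, p i * v (σ (f i)) := by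
        rw [Finset.sum_fiberwise]

theorem stmt_14 (m s : ℕ)
    (p : Fin s → ℝ) (hp : ∀ i, 0 ≤ p i) (hpsum : ∑ i, p i = 1)
    (ε : ℝ) (hε0 : 0 ≤ ε) (hε1 : ε < 1)
    (S : Fin m → Finset (Fin s))
    (hMne : ∀ i : Fin s, (Finset.univ.filter fun k => i ∈ S k).Nonempty)
    (v : Fin m → ℝ) (hv : ∀ k, v k = 0 ∨ v k = 1) :
    ((1 - ε ≤ ∑ i, p i * (Finset.univ.filter fun k => i ∈ S k).inf' (hMne i) v)
      ↔ ∀ σ : Equiv.Perm (Fin m),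
        1 - ε ≤ ∑ k, (∑ i ∈ S (σ k) \ (Finset.univ.filter fun k' => k' < k).biUnion
            (fun k' => S (σ k')), p i) * v (σ k)) ∧
    ((∑ i, p i * (Finset.univ.filter fun k => i ∈ S k).inf' (hMne i) v < 1 - ε)
      → ∀ σ : Equiv.Perm (Fin m),
        (∀ k k' : Fin m, k ≤ k' → v (σ k) ≤ v (σ k')) →
        ∑ k, (∑ i ∈ S (σ k) \ (Finset.univ.filter fun k' => k' < k).biUnion
            (fun k' => S (σ k')), p i) * v (σ k) < 1 - ε) := by
  -- For sorted σ the cut value equals the Ψ-sum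
  have hsorted : ∀ σ : Equiv.Perm (Fin m),
      (∀ k k' : Fin m, k ≤ k' → v (σ k) ≤ v (σ k')) →
      ∑ k, (∑ i ∈ S (σ k) \ (Finset.univ.filter fun k' => k' < k).biUnion
          (fun k' => S (σ k')), p i) * v (σ k)
        = ∑ i, p i * (Finset.univ.filter fun k => i ∈ S k).inf' (hMne i) v := by
    intro σ hmono
    rw [cut_eq p S hMne σ v]
    refine Finset.sum_congr rfl fun i _ => ?_
    congr 1
    set f := (Finset.univ.filter fun k => i ∈ S (σ k)).min' (aux_ne S hMne σ i) with hfdef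
    have hf : i ∈ S (σ f) := by
      have := Finset.min'_mem _ (aux_ne S hMne σ i); simpa using this
    refine le_antisymm ?_ ?_
    · refine Finset.le_inf' _ _ fun k hk => ?_
      simp only [mem_filter, mem_univ, true_and] at hk
      have h1 : f ≤ σ.symm k := Finset.min'_le _ _ (by simp [hk])
      have := hmono f (σ.symm k) h1
      simpa using this
    · exact Finset.inf'_le _ (by simp [hf])
  constructor
  · constructor
    · -- forward: each cut is ≥ 1-ε
      intro h σ
      rw [cut_eq p S hMne σ v]
      refine le_trans h (Finset.sum_le_sum fun i _ => ?_)
      refine mul_le_mul_of_nonneg_left ?_ (hp i)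
      refine Finset.inf'_le _ ?_
      have : i ∈ S (σ ((Finset.univ.filter fun k => i ∈ S (σ k)).min'
          (aux_ne S hMne σ i))) := by
        have := Finset.min'_mem _ (aux_ne S hMne σ i); simpa using this
      simp [this]
    · -- backward: use a sorting permutation
      intro h
      set σ := Tuple.sort v with hσ
      have hmono : ∀ k k' : Fin m, k ≤ k' → v (σ k) ≤ v (σ k') := by
        intro k k' hkk'
        exact Tuple.monotone_sort v hkk'
      have := h σ
      rwa [hsorted σ hmono] at this
  · intro h σ hmono
    rwa [hsorted σ hmono]
end

section
/- Let Ψ_t(v, η) = η − ln(Σ_i p_i min_{k∈M_i} v_k) be the block subproblem value (defined where the argument of ln is positive). For any (v, η) and any sorted reference point v* with δ := Σ_i p_i min_{k∈M_i} v*_k > 0, if v ∈ [0,1]^{m_t} and η ∈ ℝ satisfy Ψ_t(v, η) ≤ 0, then the cut Σ_{k=1}^{m_t} p(S_k\S_{[k−1]}) v_k ≥ δ(η + 1 − ln δ) holds; conversely, this cut, evaluated at (v*, η*) with η* = ln δ, holds with equality (i.e. the cut is tight at the point where it was generated). -/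
open Finset

theorem stmt_18 (mt s : ℕ)
    (p : Fin s → ℝ) (hp : ∀ i, 0 ≤ p i) (hpsum : ∑ i, p i = 1)
    (S : Fin mt → Finset (Fin s))
    (hMne : ∀ i : Fin s, (Finset.univ.filter fun k => i ∈ S k).Nonempty)
    (vstar : Fin mt → ℝ) (hvstar : ∀ k, 0 ≤ vstar k ∧ vstar k ≤ 1)
    (hsort : ∀ k k' : Fin mt, k ≤ k' → vstar k ≤ vstar k')
    (δ : ℝ)
    (hδ : δ = ∑ i, p i * (Finset.univ.filter fun k => i ∈ S k).inf' (hMne i) vstar)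
    (hδpos : 0 < δ) :
    (∀ (v : Fin mt → ℝ) (η : ℝ), (∀ k, 0 ≤ v k ∧ v k ≤ 1) →
      0 < ∑ i, p i * (Finset.univ.filter fun k => i ∈ S k).inf' (hMne i) v →
      η - Real.log (∑ i, p i * (Finset.univ.filter fun k => i ∈ S k).inf' (hMne i) v) ≤ 0 →
      δ * (η + 1 - Real.log δ)
        ≤ ∑ k, (∑ i ∈ S k \ (Finset.univ.filter fun k' => k' < k).biUnion S, p i) * v k) ∧
    (∑ k, (∑ i ∈ S k \ (Finset.univ.filter fun k' => k' < k).biUnion S, p i) * vstar k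
      = δ * (Real.log δ + 1 - Real.log δ)) := by
  -- f i = minimal k with i ∈ S k
  set f : Fin s → Fin mt := fun i => (Finset.univ.filter fun k => i ∈ S k).min' (hMne i)
    with hf
  have hfmem : ∀ i, i ∈ S (f i) := by
    intro i
    have := Finset.min'_mem (Finset.univ.filter fun k => i ∈ S k) (hMne i)
    simpa using this
  have hfle : ∀ i k, i ∈ S k → f i ≤ k := by
    intro i k hk
    exact Finset.min'_le _ _ (by simpa using hk)
  -- block characterization
  have hblock : ∀ (k : Fin mt) (i : Fin s),
      i ∈ S k \ (Finset.univ.filter fun k' => k' < k).biUnion S ↔ f i = k := by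
    intro k i
    simp only [Finset.mem_sdiff, Finset.mem_biUnion, Finset.mem_filter, Finset.mem_univ,
      true_and, not_exists, not_and]
    constructor
    · rintro ⟨hk, hnot⟩
      have h1 : f i ≤ k := hfle i k hk
      have h2 : ¬ f i < k := fun hlt => hnot (f i) hlt (hfmem i)
      exact le_antisymm h1 (not_lt.mp h2)
    · rintro rfl
      refine ⟨hfmem i, fun k' hk' hik' => ?_⟩
      exact absurd (hfle i k' hik') (not_le.mpr hk')
  -- fiberwise sum
  have hsum : ∀ v : Fin mt → ℝ,
      (∑ k, (∑ i ∈ S k \ (Finset.univ.filter fun k' => k' < k).biUnion S, p i) * v k)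
        = ∑ i, p i * v (f i) := by
    intro v
    have : ∀ k : Fin mt, S k \ (Finset.univ.filter fun k' => k' < k).biUnion S
        = Finset.univ.filter fun i => f i = k := by
      intro k
      ext i
      simp [hblock k i]
    calc (∑ k, (∑ i ∈ S k \ (Finset.univ.filter fun k' => k' < k).biUnion S, p i) * v k)
        = ∑ k, ∑ i ∈ Finset.univ.filter fun i => f i = k, p i * v (f i) := by
          refine Finset.sum_congr rfl fun k _ => ?_
          rw [this k, Finset.sum_mul]
          refine Finset.sum_congr rfl fun i hi => ?_
          have : f i = k := (Finset.mem_filter.mp hi).2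
          rw [this]
      _ = ∑ i, p i * v (f i) := Finset.sum_fiberwise _ _ _
  -- δ as sum over f
  have hδf : δ = ∑ i, p i * vstar (f i) := by
    rw [hδ]
    refine Finset.sum_congr rfl fun i _ => ?_
    congr 1
    refine le_antisymm (Finset.inf'_le _ (by simpa using hfmem i)) ?_
    refine Finset.le_inf' _ _ fun k hk => ?_
    exact hsort (f i) k (hfle i k (by simpa using hk))
  constructor
  · intro v η hv hwpos hη
    set w : ℝ := ∑ i, p i * (Finset.univ.filter fun k => i ∈ S k).inf' (hMne i) v with hw
    -- w ≤ Σ p_i v (f i)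
    have hw_le : w ≤ ∑ i, p i * v (f i) := by
      refine Finset.sum_le_sum fun i _ => ?_
      exact mul_le_mul_of_nonneg_left
        (Finset.inf'_le _ (by simpa using hfmem i)) (hp i)
    have hlog : Real.log (w / δ) ≤ w / δ - 1 :=
      Real.log_le_sub_one_of_pos (div_pos hwpos hδpos)
    rw [Real.log_div (ne_of_gt hwpos) (ne_of_gt hδpos)] at hlog
    have hη' : η ≤ Real.log w := by linarith
    have key : δ * (η + 1 - Real.log δ) ≤ w := by
      have h1 : δ * (Real.log w - Real.log δ) ≤ δ * (w / δ - 1) :=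
        mul_le_mul_of_nonneg_left hlog (le_of_lt hδpos)
      have h2 : δ * (w / δ - 1) = w - δ := by field_simp
      nlinarith
    calc δ * (η + 1 - Real.log δ) ≤ w := key
      _ ≤ ∑ i, p i * v (f i) := hw_le
      _ = _ := (hsum v).symm
  · rw [hsum vstar, ← hδf]
    ring
end
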